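/- If a patient p is rejected by doctor d during the run of the patient-proposing deferred-acceptance algorithm (with all agents truthful), then there is no stable matching in which p is matched to d. -/

import Mathlib

/-!
Induction along the run, with the invariant that no patient is matched in a stable matching `M`
to a doctor who has rejected him so far. A step creates rejections only at the doctor `d` just
proposed to, and only in favour of the patient `r` now held by `d`, whom `d` prefers to the
rejected `q`. If `M q = d`, then `M r ≠ d`. Should `r` prefer `d` to `M r`, the pair `(r, d)`
blocks `M`; otherwise `r`, who proposes in order of preference, was rejected by `M r` before
this step, contradicting the invariant.
-/

/-- State of the patient-proposing deferred-acceptance (Gale–Shapley) algorithm: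
`tent d` is the patient tentatively held by doctor `d` (if any), and
`next p` is the index (in patient `p`'s preference list) of the next doctor
that `p` will propose to. -/
structure GSState (n : ℕ) where
  tent : Fin n → Option (Fin n)
  next : Fin n → ℕ

/-- The set of currently free (unmatched) patients. -/
def freeSet {n : ℕ} (s : GSState n) : Finset (Fin n) :=
  Finset.univ.filter (fun p => ∀ d, s.tent d ≠ some p)

/-- One step of the algorithm: a free patient proposes to the most preferred
doctor not yet proposed to; the doctor holds the better of the proposer and
the currently held patient (lower `drank` value = more preferred). -/
def gsStep {n : ℕ} (plist : Fin n → ℕ → Fin n) (drank : Fin n → Fin n → ℕ)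
    (s : GSState n) : GSState n :=
  if h : (freeSet s).Nonempty then
    let p := (freeSet s).min' h
    let d := plist p (s.next p)
    let next' := Function.update s.next p (s.next p + 1)
    match s.tent d with
    | none => ⟨Function.update s.tent d (some p), next'⟩
    | some q =>
        if drank d p < drank d q then ⟨Function.update s.tent d (some p), next'⟩
        else ⟨s.tent, next'⟩
  else s

/-- Running the algorithm for a given number of steps from the empty state. -/
def gsRun {n : ℕ} (plist : Fin n → ℕ → Fin n) (drank : Fin n → Fin n → ℕ) :
    ℕ → GSState n
  | 0 => ⟨fun _ => none, fun _ => 0⟩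
  | k + 1 => gsStep plist drank (gsRun plist drank k)

/-- The final state of the deferred-acceptance algorithm (it stabilizes after
at most `n * n` proposals). -/
def gsFinal (n : ℕ) (plist : Fin n → ℕ → Fin n) (drank : Fin n → Fin n → ℕ) :
    GSState n :=
  gsRun plist drank (n * n + 1)

/-- The proposal made at step `k` (if any): the free patient chosen at that
step together with the doctor he proposes to. -/
def proposalAt {n : ℕ} (plist : Fin n → ℕ → Fin n) (drank : Fin n → Fin n → ℕ)
    (k : ℕ) : Option (Fin n × Fin n) :=
  let s := gsRun plist drank k
  if h : (freeSet s).Nonempty then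
    some ((freeSet s).min' h, plist ((freeSet s).min' h) (s.next ((freeSet s).min' h)))
  else none

def IsStableMatching {n : ℕ} (prank drank : Fin n → Fin n → ℕ) (M : Equiv.Perm (Fin n)) :
    Prop :=
  ∀ q e, ¬ (M q ≠ e ∧ prank q e < prank q (M q) ∧ drank e q < drank e (M.symm e))

theorem prank_injective {n : ℕ} {plist : Fin n → ℕ → Fin n}
    {prank : Fin n → Fin n → ℕ}
    (hplist : ∀ p, Function.Bijective (fun k : Fin n => plist p (k : ℕ)))
    (hprank : ∀ p (k : Fin n), prank p (plist p (k : ℕ)) = (k : ℕ)) (p : Fin n) :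
    Function.Injective (prank p) := by
  intro a b hab
  obtain ⟨i, rfl⟩ := (hplist p).2 a
  obtain ⟨j, rfl⟩ := (hplist p).2 b
  simp only [hprank] at hab
  rw [Fin.ext hab]

namespace GSState

variable {n : ℕ} (plist : Fin n → ℕ → Fin n) (drank : Fin n → Fin n → ℕ)

-- `proposalAt plist drank k` is definitionally `(gsRun plist drank k).proposal plist`.
def proposal (s : GSState n) : Option (Fin n × Fin n) :=
  if h : (freeSet s).Nonempty then
    some ((freeSet s).min' h, plist ((freeSet s).min' h) (s.next ((freeSet s).min' h)))
  else none

def Proposed (s : GSState n) (q e : Fin n) : Prop :=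
  ∃ j < s.next q, plist q j = e

-- Covers both a refusal on arrival and a later displacement by a preferred patient.
def Rejected (s : GSState n) (q e : Fin n) : Prop :=
  s.Proposed plist q e ∧ s.tent e ≠ some q

structure WellFormed (s : GSState n) : Prop where
  proposed_of_tent : ∀ {e r}, s.tent e = some r → s.Proposed plist r e
  eq_of_tent_eq_some : ∀ {e e' r}, s.tent e = some r → s.tent e' = some r → e = e'
  tent_ne_none : ∀ {q e}, s.Proposed plist q e → s.tent e ≠ none
  next_le : ∀ q, s.next q ≤ n

variable {plist drank} {s : GSState n} {p d : Fin n}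

theorem gsStep_eq_self (h : s.proposal plist = none) : gsStep plist drank s = s := by
  unfold proposal at h
  unfold gsStep
  split_ifs at h with hne
  exact dif_neg hne

theorem mem_freeSet_of_proposal_eq_some (h : s.proposal plist = some (p, d)) :
    p ∈ freeSet s := by
  unfold proposal at h
  split_ifs at h with hne
  obtain ⟨rfl, -⟩ := Prod.mk.inj (Option.some.inj h)
  exact Finset.min'_mem _ hne

theorem tent_ne_some_of_proposal_eq_some (h : s.proposal plist = some (p, d)) (e : Fin n) :
    s.tent e ≠ some p :=
  (Finset.mem_filter.1 (mem_freeSet_of_proposal_eq_some h)).2 e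

theorem eq_plist_of_proposal_eq_some (h : s.proposal plist = some (p, d)) :
    d = plist p (s.next p) := by
  unfold proposal at h
  split_ifs at h with hne
  obtain ⟨rfl, rfl⟩ := Prod.mk.inj (Option.some.inj h)
  rfl

theorem gsStep_next (h : s.proposal plist = some (p, d)) :
    (gsStep plist drank s).next = Function.update s.next p (s.next p + 1) := by
  unfold proposal at h
  unfold gsStep
  split_ifs at h with hne
  obtain ⟨rfl, rfl⟩ := Prod.mk.inj (Option.some.inj h)
  rw [dif_pos hne]
  dsimp only
  split
  · rfl
  · split_ifs <;> rfl

theorem gsStep_tent (h : s.proposal plist = some (p, d)) :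
    ((gsStep plist drank s).tent = Function.update s.tent d (some p) ∧
        ∀ q, s.tent d = some q → drank d p < drank d q) ∨
      ((gsStep plist drank s).tent = s.tent ∧
        ∃ q, s.tent d = some q ∧ drank d q ≤ drank d p) := by
  unfold proposal at h
  unfold gsStep
  split_ifs at h with hne
  obtain ⟨rfl, rfl⟩ := Prod.mk.inj (Option.some.inj h)
  rw [dif_pos hne]
  dsimp only
  split
  · next hnone => exact Or.inl ⟨rfl, by simp [hnone]⟩
  · next q hq =>
    split_ifs with hlt
    · exact Or.inl ⟨rfl, by simp [hq, hlt]⟩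
    · exact Or.inr ⟨rfl, q, hq, not_lt.1 hlt⟩

theorem proposed_gsStep_iff (h : s.proposal plist = some (p, d)) {q e : Fin n} :
    (gsStep plist drank s).Proposed plist q e ↔ s.Proposed plist q e ∨ (q = p ∧ e = d) := by
  obtain rfl := eq_plist_of_proposal_eq_some h
  simp only [Proposed, gsStep_next h, Function.update_apply]
  by_cases hq : q = p
  · subst hq
    simp only [if_true, Nat.lt_succ_iff_lt_or_eq, or_and_right, exists_or, exists_eq_left,
      true_and, eq_comm]
  · simp [hq]

theorem tent_gsStep_eq_or (h : s.proposal plist = some (p, d)) (e : Fin n) :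
    (gsStep plist drank s).tent e = s.tent e ∨
      (e = d ∧ (gsStep plist drank s).tent e = some p) := by
  rcases gsStep_tent (drank := drank) h with ⟨ht, -⟩ | ⟨ht, -⟩
  · by_cases he : e = d
    · subst he
      simp [ht]
    · simp [ht, he]
  · simp [ht]

theorem tent_gsStep_ne_none (h : s.proposal plist = some (p, d)) :
    (gsStep plist drank s).tent d ≠ none := by
  rcases gsStep_tent (drank := drank) h with ⟨ht, -⟩ | ⟨ht, q, hq, -⟩
  · simp [ht]
  · simp [ht, hq]

theorem WellFormed.next_lt_of_mem_freeSet
    (hplist : ∀ p, Function.Bijective (fun k : Fin n => plist p (k : ℕ)))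
    (hs : s.WellFormed plist) (hp : p ∈ freeSet s) : s.next p < n := by
  by_contra! hge
  -- Then `p` has proposed to every doctor, so every doctor holds a patient; as no patient is
  -- held twice, every patient, `p` included, is held.
  have hheld : ∀ e, (s.tent e).isSome := fun e => by
    obtain ⟨k, hk⟩ := (hplist p).2 e
    exact Option.isSome_iff_ne_none.2 (hs.tent_ne_none ⟨k, k.isLt.trans_le hge, hk⟩)
  let holder : Fin n → Fin n := fun e => (s.tent e).get (hheld e)
  have hholder : ∀ e, s.tent e = some (holder e) := fun e => (Option.some_get _).symm
  have : Function.Injective holder := fun e e' hee =>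
    hs.eq_of_tent_eq_some (hholder e) (hee ▸ hholder e')
  obtain ⟨e, he⟩ := Finite.surjective_of_injective this p
  exact (Finset.mem_filter.1 hp).2 e (he ▸ hholder e)

theorem WellFormed.gsStep
    (hplist : ∀ p, Function.Bijective (fun k : Fin n => plist p (k : ℕ)))
    (hs : s.WellFormed plist) : (gsStep plist drank s).WellFormed plist := by
  rcases hprop : s.proposal plist with _ | ⟨p, d⟩
  · rwa [gsStep_eq_self hprop]
  have hp_free := tent_ne_some_of_proposal_eq_some hprop
  refine ⟨fun {e r} hr => ?_, fun {e e' r} hr hr' => ?_, fun {q e} hqe => ?_, fun q => ?_⟩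
  · rcases tent_gsStep_eq_or hprop e with he | ⟨rfl, he⟩
    · exact (proposed_gsStep_iff hprop).2 (Or.inl (hs.proposed_of_tent (he ▸ hr)))
    · obtain rfl : p = r := Option.some.inj (he.symm.trans hr)
      exact (proposed_gsStep_iff hprop).2 (Or.inr ⟨rfl, rfl⟩)
  · rcases tent_gsStep_eq_or hprop e with he | ⟨rfl, he⟩ <;>
      rcases tent_gsStep_eq_or hprop e' with he' | ⟨rfl, he'⟩
    · exact hs.eq_of_tent_eq_some (he ▸ hr) (he' ▸ hr')
    · obtain rfl : p = r := Option.some.inj (he'.symm.trans hr')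
      exact absurd (he ▸ hr) (hp_free e)
    · obtain rfl : p = r := Option.some.inj (he.symm.trans hr)
      exact absurd (he' ▸ hr') (hp_free e')
    · rfl
  · rcases (proposed_gsStep_iff hprop).1 hqe with hqe | ⟨-, rfl⟩
    · rcases tent_gsStep_eq_or hprop e with he | ⟨-, he⟩
      · exact he ▸ hs.tent_ne_none hqe
      · simp [he]
    · exact tent_gsStep_ne_none hprop
  · rw [gsStep_next hprop, Function.update_apply]
    split_ifs with hq
    · subst hq
      exact hs.next_lt_of_mem_freeSet hplist (mem_freeSet_of_proposal_eq_some hprop)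
    · exact hs.next_le q

theorem wellFormed_gsRun
    (hplist : ∀ p, Function.Bijective (fun k : Fin n => plist p (k : ℕ))) :
    ∀ t, (gsRun plist drank t).WellFormed plist
  | 0 => ⟨fun h => by simp [gsRun] at h, fun h => by simp [gsRun] at h,
      fun ⟨_, hj, _⟩ => by simp [gsRun] at hj, fun _ => by simp [gsRun]⟩
  | t + 1 => (wellFormed_gsRun hplist t).gsStep hplist

theorem WellFormed.rejected_of_prank_lt {prank : Fin n → Fin n → ℕ}
    (hplist : ∀ p, Function.Bijective (fun k : Fin n => plist p (k : ℕ)))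
    (hprank : ∀ p (k : Fin n), prank p (plist p (k : ℕ)) = (k : ℕ))
    (hs : s.WellFormed plist) {r e e' : Fin n} (hr : s.tent e = some r)
    (hlt : prank r e' < prank r e) : s.Rejected plist r e' := by
  obtain ⟨j, hj, rfl⟩ := hs.proposed_of_tent hr
  obtain ⟨k, rfl⟩ := (hplist r).2 e'
  have hjn : j < n := hj.trans_le (hs.next_le r)
  have hj_rank : prank r (plist r j) = j := hprank r ⟨j, hjn⟩
  have hkj : (k : ℕ) < j := by simpa [hprank, hj_rank] using hlt
  refine ⟨⟨k, hkj.trans hj, rfl⟩, fun hk => hkj.ne ?_⟩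
  simpa [hprank, hj_rank] using congrArg (prank r) (hs.eq_of_tent_eq_some hk hr)

theorem rejected_gsStep (hdinj : ∀ d, Function.Injective (drank d))
    (h : s.proposal plist = some (p, d)) {q e : Fin n}
    (hqe : (gsStep plist drank s).Rejected plist q e) :
    s.Rejected plist q e ∨
      e = d ∧ ∃ r ≠ q, (gsStep plist drank s).tent d = some r ∧ drank d r < drank d q := by
  have hp_free := tent_ne_some_of_proposal_eq_some h
  obtain ⟨hproposed, hheld⟩ := hqe
  by_cases hold : s.Rejected plist q e
  · exact Or.inl hold
  right
  rcases (proposed_gsStep_iff h).1 hproposed with hproposed | ⟨rfl, rfl⟩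
  · -- `q` was held by `e` and is now displaced by `p`.
    have hqe : s.tent e = some q := not_not.1 fun hne => hold ⟨hproposed, hne⟩
    rcases gsStep_tent h with ⟨ht, hacc⟩ | ⟨ht, -⟩
    · obtain rfl : e = d := by
        by_contra hed
        rw [ht, Function.update_of_ne hed] at hheld
        exact hheld hqe
      refine ⟨rfl, p, ?_, by rw [ht, Function.update_self], hacc q hqe⟩
      rintro rfl
      exact hp_free _ hqe
    · exact absurd (ht ▸ hqe) hheld
  · -- `q` is `p`, refused by `d` in favour of its current holder.
    rcases gsStep_tent h with ⟨ht, -⟩ | ⟨ht, q0, hq0, hle⟩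
    · exact absurd (by rw [ht, Function.update_self]) hheld
    · have hq0q : q0 ≠ q := fun h => hp_free e (h ▸ hq0)
      exact ⟨rfl, q0, hq0q, ht ▸ hq0, lt_of_le_of_ne hle fun h => hq0q (hdinj e h)⟩

theorem ne_of_rejected_gsStep {prank : Fin n → Fin n → ℕ}
    (hplist : ∀ p, Function.Bijective (fun k : Fin n => plist p (k : ℕ)))
    (hprank : ∀ p (k : Fin n), prank p (plist p (k : ℕ)) = (k : ℕ))
    (hdinj : ∀ d, Function.Injective (drank d))
    {M : Equiv.Perm (Fin n)} (hM : IsStableMatching prank drank M)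
    (hs : (gsStep plist drank s).WellFormed plist)
    (hrej : ∀ q e, s.Rejected plist q e → M q ≠ e) :
    ∀ q e, (gsStep plist drank s).Rejected plist q e → M q ≠ e := by
  rcases hprop : s.proposal plist with _ | ⟨p, d⟩
  · rwa [gsStep_eq_self hprop]
  intro q e hqe hMq
  rcases rejected_gsStep hdinj hprop hqe with hold | ⟨rfl, r, hrq, hr, hpref⟩
  · exact hrej q e hold hMq
  have hMr : M r ≠ e := fun h => hrq (M.injective (h.trans hMq.symm))
  rcases lt_or_gt_of_ne (mt (prank_injective hplist hprank r ·) hMr) with hlt | hgt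
  · rcases rejected_gsStep hdinj hprop (hs.rejected_of_prank_lt hplist hprank hr hlt) with
      hold | ⟨heq, -⟩
    · exact hrej r (M r) hold rfl
    · exact hMr heq
  · exact hM r e ⟨hMr, hgt, by rwa [M.symm_apply_eq.2 hMq.symm]⟩

theorem ne_of_rejected_gsRun {prank : Fin n → Fin n → ℕ}
    (hplist : ∀ p, Function.Bijective (fun k : Fin n => plist p (k : ℕ)))
    (hprank : ∀ p (k : Fin n), prank p (plist p (k : ℕ)) = (k : ℕ))
    (hdinj : ∀ d, Function.Injective (drank d))
    {M : Equiv.Perm (Fin n)} (hM : IsStableMatching prank drank M) :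
    ∀ t q e, (gsRun plist drank t).Rejected plist q e → M q ≠ e
  | 0, _, _, ⟨⟨_, hj, _⟩, _⟩ => by simp [gsRun] at hj
  | t + 1, q, e, h => ne_of_rejected_gsStep hplist hprank hdinj hM
      (wellFormed_gsRun hplist (t + 1)) (ne_of_rejected_gsRun hplist hprank hdinj hM t) q e h

end GSState

theorem gs_rejected_unachievable_general (n : ℕ)
    (plist : Fin n → ℕ → Fin n) (prank drank : Fin n → Fin n → ℕ)
    (hplist : ∀ p, Function.Bijective (fun k : Fin n => plist p (k : ℕ)))
    (hprank : ∀ p (k : Fin n), prank p (plist p (k : ℕ)) = (k : ℕ))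
    (hdinj : ∀ d, Function.Injective (drank d)) :
    ∀ (k : ℕ) (p d : Fin n),
      proposalAt plist drank k = some (p, d) →
      (gsRun plist drank (k + 1)).tent d ≠ some p →
      ∀ M' : Equiv.Perm (Fin n),
        (∀ q e, ¬ (M' q ≠ e ∧ prank q e < prank q (M' q) ∧
            drank e q < drank e (M'.symm e))) →
        M' p ≠ d := by
  intro k p d hprop hheld M' hM'
  have hproposed : (gsRun plist drank (k + 1)).Proposed plist p d :=
    (GSState.proposed_gsStep_iff hprop).2 (Or.inr ⟨rfl, rfl⟩)
  exact GSState.ne_of_rejected_gsRun hplist hprank hdinj hM' (k + 1) p d ⟨hproposed, hheld⟩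

/-- if patient `p` is rejected by doctor `d` at some step of the
patient-proposing deferred-acceptance algorithm (he proposes to `d` at step `k`
but `d` does not hold him after the step), then no stable matching pairs `p`
with `d`. -/
theorem gs_rejected_unachievable (n : ℕ)
    (plist : Fin n → ℕ → Fin n) (prank drank : Fin n → Fin n → ℕ)
    (hplist : ∀ p, Function.Bijective (fun k : Fin n => plist p (k : ℕ)))
    (hprank : ∀ p (k : Fin n), prank p (plist p (k : ℕ)) = (k : ℕ))
    (hpinj : ∀ p, Function.Injective (prank p))
    (hdinj : ∀ d, Function.Injective (drank d)) :
    ∀ (k : ℕ) (p d : Fin n),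
      proposalAt plist drank k = some (p, d) →
      (gsRun plist drank (k + 1)).tent d ≠ some p →
      ∀ M' : Equiv.Perm (Fin n),
        (∀ q e, ¬ (M' q ≠ e ∧ prank q e < prank q (M' q) ∧
            drank e q < drank e (M'.symm e))) →
        M' p ≠ d :=
  gs_rejected_unachievable_general n plist prank drank hplist hprank hdinj
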